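/- arXiv:2512.09459 — 2 statements merged into one kernel-verified Lean document; each statement's English description precedes it below -/
import Mathlib

section
/- Let f be analytic on a neighborhood of the rectangle Ω = {x + η + iτ : |η| ≤ H, 0 ≤ τ ≤ Z} with |f'''| ≤ M on Ω. Then the improper double integral C(x) = (1/(2HZ)) ∫_{-H}^{H} ∫_{0}^{Z} Im[f(x+η+iτ)]/τ dτ dη converges, and |C(x) − f'(x)| ≤ (M/6)H² + (M/18)Z². -/
set_option maxHeartbeats 1000000

open MeasureTheory Topology intervalIntegral Set

private lemma analytic_iter {f : ℂ → ℂ} {U : Set ℂ} (hU : IsOpen U)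
    (hf : DifferentiableOn ℂ f U) (k : ℕ) : AnalyticOnNhd ℂ (iteratedDeriv k f) U := by
  induction k with
  | zero => simpa using hf.analyticOnNhd hU
  | succ n ih => rw [iteratedDeriv_succ]; exact ih.deriv

private lemma chain_line {f : ℂ → ℂ} {U : Set ℂ} (hU : IsOpen U)
    (hf : DifferentiableOn ℂ f U) (c w : ℂ) (k : ℕ) {s : ℝ} (hs : c + s * w ∈ U) :
    HasDerivAt (fun t : ℝ => iteratedDeriv k f (c + t * w))
      (w * iteratedDeriv (k + 1) f (c + s * w)) s := by
  have hL : HasDerivAt (fun t : ℝ => c + (t : ℂ) * w) w s := by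
    simpa using ((Complex.ofRealCLM.hasDerivAt (x := s)).mul_const w).const_add c
  have hd : HasDerivAt (iteratedDeriv k f) (iteratedDeriv (k + 1) f (c + s * w)) (c + s * w) := by
    have h1 := ((analytic_iter hU hf k) _ hs).differentiableAt.hasDerivAt
    rwa [show deriv (iteratedDeriv k f) (c + ↑s * w) = iteratedDeriv (k+1) f (c + ↑s * w) by
      rw [iteratedDeriv_succ]] at h1
  simpa [Function.comp_def, smul_eq_mul, mul_comm] using
    (hd.scomp s hL : HasDerivAt ((iteratedDeriv k f) ∘ fun t : ℝ => c + (t:ℂ) * w) _ s)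

private lemma cubic_bound {d0 d1 d2 d3 : ℝ → ℂ} {b M : ℝ}
    (h0 : ∀ s ∈ Icc (0:ℝ) b, HasDerivAt d0 (d1 s) s)
    (h1 : ∀ s ∈ Icc (0:ℝ) b, HasDerivAt d1 (d2 s) s)
    (h2 : ∀ s ∈ Icc (0:ℝ) b, HasDerivAt d2 (d3 s) s)
    (hc1 : ContinuousOn d1 (Icc (0:ℝ) b)) (hc2 : ContinuousOn d2 (Icc (0:ℝ) b))
    (hc3 : ContinuousOn d3 (Icc (0:ℝ) b))
    (hM : ∀ s ∈ Icc (0:ℝ) b, ‖d3 s‖ ≤ M) :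
    ∀ τ ∈ Icc (0:ℝ) b,
      ‖d0 τ - d0 0 - (τ:ℂ) * d1 0 - ((τ:ℂ)^2/2) * d2 0‖ ≤ M * τ^3 / 6 := by
  intro τ hτ
  obtain ⟨hτ0, hτb⟩ := hτ
  have h0b : (0:ℝ) ∈ Icc (0:ℝ) b := ⟨le_refl _, le_trans hτ0 hτb⟩
  have hsub : Icc (0:ℝ) τ ⊆ Icc (0:ℝ) b := Icc_subset_Icc (le_refl _) hτb
  have hM0 : 0 ≤ M := le_trans (norm_nonneg _) (hM 0 ⟨le_refl _, le_trans hτ0 hτb⟩)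
  have huIcc : uIcc (0:ℝ) τ = Icc 0 τ := uIcc_of_le hτ0
  have huIoc : uIoc (0:ℝ) τ ⊆ Icc (0:ℝ) b := by
    rw [uIoc_of_le hτ0]; exact (Ioc_subset_Icc_self).trans hsub
  -- step 1 : ‖d2 s - d2 0‖ ≤ M * s on Icc 0 b
  have step1 : ∀ s ∈ Icc (0:ℝ) b, ‖d2 s - d2 0‖ ≤ M * s := by
    intro s hs
    have hs0 : (0:ℝ) ≤ s := hs.1
    have hsubs : Icc (0:ℝ) s ⊆ Icc (0:ℝ) b := Icc_subset_Icc (le_refl _) hs.2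
    have heq : ∫ t in (0:ℝ)..s, d3 t = d2 s - d2 0 := by
      apply integral_eq_sub_of_hasDerivAt
      · intro t ht; exact h2 t (hsubs ((uIcc_of_le hs0) ▸ ht))
      · exact (hc3.mono hsubs).intervalIntegrable_of_Icc hs0
    calc ‖d2 s - d2 0‖ = ‖∫ t in (0:ℝ)..s, d3 t‖ := by rw [heq]
      _ ≤ M * |s - 0| := by
          apply intervalIntegral.norm_integral_le_of_norm_le_const
          intro t ht
          exact hM t (hsubs (Ioc_subset_Icc_self ((uIoc_of_le hs0) ▸ ht)))
      _ = M * s := by rw [sub_zero, abs_of_nonneg hs0]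
  -- step 2
  have step2 : ∀ s ∈ Icc (0:ℝ) b, ‖d1 s - d1 0 - (s:ℂ) * d2 0‖ ≤ M * s^2 / 2 := by
    intro s hs
    have hs0 : (0:ℝ) ≤ s := hs.1
    have hsubs : Icc (0:ℝ) s ⊆ Icc (0:ℝ) b := Icc_subset_Icc (le_refl _) hs.2
    have heq : ∫ t in (0:ℝ)..s, (d2 t - d2 0) = d1 s - d1 0 - (s:ℂ) * d2 0 := by
      have : ∀ t ∈ uIcc (0:ℝ) s, HasDerivAt (fun u : ℝ => d1 u - (u:ℂ) * d2 0)
          (d2 t - d2 0) t := by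
        intro t ht
        have := (h1 t (hsubs ((uIcc_of_le hs0) ▸ ht))).sub
          ((((Complex.ofRealCLM.hasDerivAt (x := t))).mul_const (d2 0)))
        exact this.congr_deriv (by simp)
      have h := integral_eq_sub_of_hasDerivAt this
        ((((hc2.mono hsubs).sub continuousOn_const)).intervalIntegrable_of_Icc hs0)
      rw [h]; push_cast; ring
    calc ‖d1 s - d1 0 - (s:ℂ) * d2 0‖ = ‖∫ t in (0:ℝ)..s, (d2 t - d2 0)‖ := by rw [heq]
      _ ≤ |∫ t in (0:ℝ)..s, M * t| := by
          apply intervalIntegral.norm_integral_le_abs_of_norm_le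
          · filter_upwards [ae_restrict_mem measurableSet_uIoc] with t ht
            exact step1 t (hsubs (Ioc_subset_Icc_self ((uIoc_of_le hs0) ▸ ht)))
          · exact (continuous_const.mul continuous_id).intervalIntegrable _ _
      _ = M * s^2 / 2 := by
          rw [intervalIntegral.integral_const_mul, integral_id, abs_of_nonneg
            (by nlinarith [sq_nonneg s, mul_nonneg hM0 (sq_nonneg s)])]; ring
  -- step 3
  have heq : ∫ t in (0:ℝ)..τ, (d1 t - d1 0 - (t:ℂ) * d2 0)
      = d0 τ - d0 0 - (τ:ℂ) * d1 0 - ((τ:ℂ)^2/2) * d2 0 := by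
    have hder : ∀ t ∈ uIcc (0:ℝ) τ, HasDerivAt
        (fun u : ℝ => d0 u - (u:ℂ) * d1 0 - ((u:ℂ)^2/2) * d2 0)
        (d1 t - d1 0 - (t:ℂ) * d2 0) t := by
      intro t ht
      have ht' : t ∈ Icc (0:ℝ) b := hsub (huIcc ▸ ht)
      have e1 : HasDerivAt (fun u : ℝ => (u:ℂ)) 1 t := by
        exact (Complex.ofRealCLM.hasDerivAt (x := t)).congr_deriv (by simp)
      have e2 : HasDerivAt (fun u : ℝ => ((u:ℂ)^2/2) * d2 0) ((t:ℂ) * d2 0) t := by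
        have hfe : (fun u : ℝ => ((u:ℂ)^2/2) * d2 0)
            = fun u : ℝ => ((u:ℂ) * (u:ℂ)) * (d2 0 / 2) := by funext u; ring
        rw [hfe]
        exact ((e1.mul e1).mul_const (d2 0 / 2)).congr_deriv (by ring)
      have := ((h0 t ht').sub (e1.mul_const (d1 0))).sub e2
      exact this.congr_deriv (by simp)
    have h := integral_eq_sub_of_hasDerivAt hder
      ((((hc1.mono hsub).sub continuousOn_const).sub
        ((Complex.continuous_ofReal.continuousOn).mul
        continuousOn_const)).intervalIntegrable_of_Icc hτ0)
    rw [h]; push_cast; ring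
  calc ‖d0 τ - d0 0 - (τ:ℂ) * d1 0 - ((τ:ℂ)^2/2) * d2 0‖
      = ‖∫ t in (0:ℝ)..τ, (d1 t - d1 0 - (t:ℂ) * d2 0)‖ := by rw [heq]
    _ ≤ |∫ t in (0:ℝ)..τ, M * t^2 / 2| := by
        apply intervalIntegral.norm_integral_le_abs_of_norm_le
        · filter_upwards [ae_restrict_mem measurableSet_uIoc] with t ht
          exact step2 t (huIoc ht)
        · exact ((continuous_const.mul (continuous_pow 2)).div_const 2).intervalIntegrable _ _
      _ = M * τ^3 / 6 := by
        simp_rw [mul_div_assoc]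
        rw [intervalIntegral.integral_const_mul, intervalIntegral.integral_div, integral_pow]
        rw [abs_of_nonneg (by
          have h3 : (0:ℝ) ≤ τ^3 := by positivity
          have := mul_nonneg hM0 h3
          norm_num
          nlinarith)]
        ring

private lemma im_deriv_zero {g : ℂ → ℂ} {U : Set ℂ} (hU : IsOpen U)
    (hg : DifferentiableOn ℂ g U)
    (h0 : ∀ t : ℝ, (t : ℂ) ∈ U → (g t).im = 0) :
    ∀ t : ℝ, (t : ℂ) ∈ U → (deriv g t).im = 0 := by
  intro t ht
  have hd : HasDerivAt g (deriv g ↑t) ↑t :=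
    ((hg.analyticOnNhd hU) _ ht).differentiableAt.hasDerivAt
  have h1 : HasDerivAt (fun s : ℝ => g ↑s) (deriv g ↑t) t := hd.comp_ofReal
  have h2 : HasDerivAt (fun s : ℝ => (g ↑s).im) (deriv g ↑t).im t := by
    simpa [Function.comp_def] using (Complex.imCLM.hasFDerivAt.comp_hasDerivAt t h1)
  have hev : (fun s : ℝ => (g ↑s).im) =ᶠ[𝓝 t] fun _ => (0:ℝ) := by
    have hmem : ∀ᶠ s : ℝ in 𝓝 t, (s : ℂ) ∈ U :=
      (Complex.continuous_ofReal.continuousAt).preimage_mem_nhds (hU.mem_nhds ht)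
    filter_upwards [hmem] with s hs
    exact h0 s hs
  have h3 : HasDerivAt (fun s : ℝ => (g ↑s).im) 0 t :=
    (hasDerivAt_const t (0:ℝ)).congr_of_eventuallyEq hev
  exact h2.unique h3

/-- Existence of the CSIT and the symmetric error bound.
For `f` analytic on a neighborhood of the rectangle
`Ω = {z : x + η + iτ : |η| ≤ H, 0 ≤ τ ≤ Z}`, real-valued on the real axis,
with `|f'''| ≤ M` on `Ω`, the double integral defining the CSIT converges and
`|C_{H,Z}f(x) − f'(x)| ≤ (M/6)H² + (M/18)Z²`. -/
theorem csit_exists_and_error_bound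
    (f : ℂ → ℂ) (x H Z M : ℝ) (hH : 0 < H) (hZ : 0 < Z)
    (U : Set ℂ) (hU : IsOpen U)
    (hΩU : {z : ℂ | |z.re - x| ≤ H ∧ 0 ≤ z.im ∧ z.im ≤ Z} ⊆ U)
    (hf : DifferentiableOn ℂ f U)
    (hreal : ∀ t : ℝ, (f t).im = 0)
    (hM : ∀ z ∈ {z : ℂ | |z.re - x| ≤ H ∧ 0 ≤ z.im ∧ z.im ≤ Z},
      ‖iteratedDeriv 3 f z‖ ≤ M) :
    (∀ η ∈ Set.Icc (-H) H,
      IntervalIntegrable (fun τ : ℝ => (f (↑x + ↑η + ↑τ * Complex.I)).im / τ)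
        volume 0 Z) ∧
    (IntervalIntegrable
      (fun η : ℝ => ∫ τ in (0:ℝ)..Z, (f (↑x + ↑η + ↑τ * Complex.I)).im / τ)
      volume (-H) H) ∧
    |(1 / (2 * H * Z)) *
        (∫ η in (-H)..H, ∫ τ in (0:ℝ)..Z, (f (↑x + ↑η + ↑τ * Complex.I)).im / τ)
      - (deriv f ↑x).re|
      ≤ M / 6 * H ^ 2 + M / 18 * Z ^ 2 := by
  have hM0 : 0 ≤ M := le_trans (norm_nonneg _) (hM ↑x (by
    refine ⟨?_, ?_, ?_⟩ <;> simp [hH.le, hZ.le]))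
  have hmemΩ : ∀ η ∈ Icc (-H) H, ∀ τ ∈ Icc (0:ℝ) Z,
      (↑x + ↑η + ↑τ * Complex.I) ∈ {z : ℂ | |z.re - x| ≤ H ∧ 0 ≤ z.im ∧ z.im ≤ Z} := by
    intro η hη τ hτ
    refine ⟨?_, ?_, ?_⟩ <;>
      simp only [Complex.add_re, Complex.ofReal_re, Complex.mul_re, Complex.I_re,
        Complex.ofReal_im, Complex.I_im, Complex.add_im, Complex.mul_im, Set.mem_setOf_eq] <;>
      [skip; skip; skip]
    · rw [abs_le]; constructor <;> [linarith [hη.1]; linarith [hη.2]]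
    · linarith [hτ.1]
    · linarith [hτ.2]
  have hmemU : ∀ η ∈ Icc (-H) H, ∀ τ ∈ Icc (0:ℝ) Z,
      (↑x + ↑η + ↑τ * Complex.I) ∈ U := fun η hη τ hτ => hΩU (hmemΩ η hη τ hτ)
  have hsegU : ∀ η ∈ Icc (-H) H, (↑x + ↑η : ℂ) ∈ U := by
    intro η hη
    have := hmemU η hη 0 ⟨le_refl _, hZ.le⟩
    simpa using this
  -- realness of second derivative on real segment
  have hreU2 : ∀ t : ℝ, (↑t : ℂ) ∈ U → (iteratedDeriv 2 f ↑t).im = 0 := by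
    have h1 := im_deriv_zero hU hf (fun t _ => hreal t)
    have h2 := im_deriv_zero hU ((hf.analyticOnNhd hU).deriv.differentiableOn) h1
    intro t ht
    simpa [iteratedDeriv_succ, iteratedDeriv_one] using h2 t ht
  -- general second-order Taylor bound along unit directions
  have taylor : ∀ (c w : ℂ), ‖w‖ = 1 → ∀ b : ℝ, 0 < b →
      (∀ s ∈ Icc (0:ℝ) b, c + ↑s * w ∈ U) →
      (∀ s ∈ Icc (0:ℝ) b, ‖iteratedDeriv 3 f (c + ↑s * w)‖ ≤ M) →
      ∀ τ ∈ Icc (0:ℝ) b,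
        ‖f (c + ↑τ * w) - f c - ↑τ * (w * deriv f c)
          - ((τ:ℂ)^2/2) * (w^2 * iteratedDeriv 2 f c)‖ ≤ M * τ^3 / 6 := by
    intro c w hw b hb hsub hMb τ hτ
    have hchain : ∀ k : ℕ, ∀ s ∈ Icc (0:ℝ) b,
        HasDerivAt (fun t : ℝ => w^k * iteratedDeriv k f (c + ↑t * w))
          (w^(k+1) * iteratedDeriv (k+1) f (c + ↑s * w)) s := by
      intro k s hs
      have := (chain_line hU hf c w k (hsub s hs)).const_mul (w^k)
      exact this.congr_deriv (by ring)
    have hcont : ∀ k : ℕ, ContinuousOn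
        (fun s : ℝ => w^k * iteratedDeriv k f (c + ↑s * w)) (Icc (0:ℝ) b) := by
      intro k
      exact continuousOn_const.mul (((analytic_iter hU hf k).continuousOn).comp
        (Continuous.continuousOn
          (continuous_const.add (Complex.continuous_ofReal.mul continuous_const)))
        (fun s hs => hsub s hs))
    have key := cubic_bound (b := b) (M := M)
      (hchain 0) (by simpa using hchain 1) (by simpa [pow_succ] using hchain 2)
      (hcont 1) (hcont 2) (hcont 3)
      (fun s hs => by rw [norm_mul, norm_pow, hw, one_pow, one_mul]; exact hMb s hs)
      τ hτ
    simpa [iteratedDeriv_one] using key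
  set P : ℝ → ℝ := fun η => (deriv f (↑x + ↑η)).re with hPdef
  have key1 : ∀ η ∈ Icc (-H) H, ∀ τ ∈ Icc (0:ℝ) Z,
      |(f (↑x + ↑η + ↑τ * Complex.I)).im - τ * P η| ≤ M * τ^3 / 6 := by
    intro η hη τ hτ
    have ht := taylor (↑x + ↑η) Complex.I (by simp) Z hZ
      (fun s hs => hmemU η hη s hs)
      (fun s hs => hM _ (hmemΩ η hη s hs)) τ hτ
    have him := Complex.abs_im_le_norm
      (f (↑x + ↑η + ↑τ * Complex.I) - f (↑x + ↑η)
        - ↑τ * (Complex.I * deriv f (↑x + ↑η))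
        - ((τ:ℂ)^2/2) * (Complex.I^2 * iteratedDeriv 2 f (↑x + ↑η)))
    have hcast : (↑x + ↑η : ℂ) = ((x + η : ℝ) : ℂ) := by push_cast; ring
    have e1 : (f (↑x + ↑η)).im = 0 := by rw [hcast]; exact hreal _
    have e2 : (iteratedDeriv 2 f (↑x + ↑η)).im = 0 := by
      rw [hcast]; exact hreU2 (x + η) (by rw [← hcast]; exact hsegU η hη)
    have him2 : (f ((x:ℂ) + (η:ℝ) + (τ:ℝ) * Complex.I) - f ((x:ℂ) + (η:ℝ))
        - ((τ:ℝ):ℂ) * (Complex.I * deriv f ((x:ℂ) + (η:ℝ)))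
        - ((τ:ℂ)^2/2) * (Complex.I^2 * iteratedDeriv 2 f ((x:ℂ) + (η:ℝ)))).im
        = (f ((x:ℂ) + (η:ℝ) + (τ:ℝ) * Complex.I)).im - τ * P η := by
      have e3 : ((τ:ℂ)^2/2) = (((τ^2/2 : ℝ)) : ℂ) := by push_cast; ring
      rw [e3, Complex.I_sq]
      simp only [Complex.sub_im, Complex.mul_im, Complex.mul_re, Complex.I_re,
        Complex.I_im, Complex.ofReal_re, Complex.ofReal_im, Complex.neg_im,
        Complex.neg_re, Complex.one_im, e1, e2, hPdef]
      ring
    rw [him2] at him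
    calc |(f (↑x + ↑η + ↑τ * Complex.I)).im - τ * P η| ≤ _ := him
      _ ≤ M * τ^3 / 6 := by exact ht
  have key1' : ∀ η ∈ Icc (-H) H, ∀ τ ∈ Ioc (0:ℝ) Z,
      |(f (↑x + ↑η + ↑τ * Complex.I)).im / τ - P η| ≤ M * τ^2 / 6 := by
    intro η hη τ hτ
    have hτ0 : 0 < τ := hτ.1
    have hk := key1 η hη τ ⟨hτ0.le, hτ.2⟩
    have e : (f (↑x + ↑η + ↑τ * Complex.I)).im / τ - P η
        = ((f (↑x + ↑η + ↑τ * Complex.I)).im - τ * P η) / τ := by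
      field_simp
    rw [e, abs_div, abs_of_pos hτ0, div_le_iff₀ hτ0]
    calc |(f (↑x + ↑η + ↑τ * Complex.I)).im - τ * P η| ≤ M * τ^3/6 := hk
      _ = M * τ^2/6 * τ := by ring
  have hPcont : ContinuousOn P (Icc (-H) H) := by
    apply Complex.continuous_re.comp_continuousOn
    exact ((hf.analyticOnNhd hU).deriv.continuousOn).comp
      (Continuous.continuousOn (continuous_const.add Complex.continuous_ofReal))
      (fun η hη => hsegU η hη)
  obtain ⟨C₁, hC₁⟩ := (isCompact_Icc (a := -H) (b := H)).exists_bound_of_continuousOn hPcont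
  have hfc : ContinuousOn f U := hf.continuousOn
  have hφcont : ∀ η ∈ Icc (-H) H, ContinuousOn
      (fun τ : ℝ => (f (↑x + ↑η + ↑τ * Complex.I)).im / τ) (Ioc (0:ℝ) Z) := by
    intro η hη
    apply ContinuousOn.div
    · apply Complex.continuous_im.comp_continuousOn
      refine hfc.comp (Continuous.continuousOn
        (continuous_const.add (Complex.continuous_ofReal.mul continuous_const))) ?_
      intro τ hτ; exact hmemU η hη τ (Ioc_subset_Icc_self hτ)
    · exact continuousOn_id
    · intro τ hτ; exact ne_of_gt hτ.1
  have hφbdd : ∀ η ∈ Icc (-H) H, ∀ τ ∈ Ioc (0:ℝ) Z,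
      ‖(f (↑x + ↑η + ↑τ * Complex.I)).im / τ‖ ≤ C₁ + M * Z^2 / 6 := by
    intro η hη τ hτ
    have h1 := key1' η hη τ hτ
    have h2 : M * τ^2/6 ≤ M * Z^2/6 := by
      have h3 := hτ.1; have h4 := hτ.2
      have h5 : τ^2 ≤ Z^2 := by nlinarith
      have h6 := mul_le_mul_of_nonneg_left h5 hM0
      linarith
    have h3 : |P η| ≤ C₁ := hC₁ η hη
    rw [Real.norm_eq_abs]
    calc |(f (↑x + ↑η + ↑τ * Complex.I)).im / τ|
        = |((f (↑x + ↑η + ↑τ * Complex.I)).im / τ - P η) + P η| := by ring_nf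
      _ ≤ |(f (↑x + ↑η + ↑τ * Complex.I)).im / τ - P η| + |P η| := abs_add_le _ _
      _ ≤ C₁ + M * Z^2 / 6 := by linarith
  have conj1 : ∀ η ∈ Icc (-H) H, IntervalIntegrable
      (fun τ : ℝ => (f (↑x + ↑η + ↑τ * Complex.I)).im / τ) volume 0 Z := by
    intro η hη
    rw [intervalIntegrable_iff_integrableOn_Ioc_of_le hZ.le]
    have hmeas : AEStronglyMeasurable
        (fun τ : ℝ => (f (↑x + ↑η + ↑τ * Complex.I)).im / τ)
        (volume.restrict (Ioc (0:ℝ) Z)) :=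
      (hφcont η hη).aestronglyMeasurable measurableSet_Ioc
    apply Integrable.mono' (g := fun _ : ℝ => C₁ + M * Z^2 / 6) ?_ hmeas ?_
    · exact integrableOn_const measure_Ioc_lt_top.ne
    · rw [ae_restrict_iff' measurableSet_Ioc]
      filter_upwards with τ hτ
      exact hφbdd η hη τ hτ
  set Q : ℝ → ℝ := fun η => ∫ τ in (0:ℝ)..Z, (f (↑x + ↑η + ↑τ * Complex.I)).im / τ
    with hQdef
  have hQcont : ContinuousOn Q (Icc (-H) H) := by
    have hQeq : Q = fun η : ℝ => ∫ τ in Ioc (0:ℝ) Z, (f (↑x + ↑η + ↑τ * Complex.I)).im / τ := by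
      funext η
      rw [hQdef]
      exact intervalIntegral.integral_of_le hZ.le
    rw [hQeq]
    apply continuousOn_of_dominated (bound := fun _ : ℝ => C₁ + M * Z^2 / 6)
    · intro η hη; exact (hφcont η hη).aestronglyMeasurable measurableSet_Ioc
    · intro η hη
      rw [ae_restrict_iff' measurableSet_Ioc]
      filter_upwards with τ hτ; exact hφbdd η hη τ hτ
    · exact integrableOn_const measure_Ioc_lt_top.ne
    · rw [ae_restrict_iff' measurableSet_Ioc]
      filter_upwards with τ hτ
      apply ContinuousOn.div
      · apply Complex.continuous_im.comp_continuousOn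
        refine hfc.comp (Continuous.continuousOn
          ((continuous_const.add Complex.continuous_ofReal).add continuous_const)) ?_
        intro η hη; exact hmemU η hη τ (Ioc_subset_Icc_self hτ)
      · exact continuousOn_const
      · intro η hη; exact ne_of_gt hτ.1
  have huIccH : uIcc (-H) H = Icc (-H) H := uIcc_of_le (by linarith)
  have conj2 : IntervalIntegrable Q volume (-H) H :=
    (huIccH ▸ hQcont : ContinuousOn Q (uIcc (-H) H)).intervalIntegrable
  have hQval : ∀ η ∈ Icc (-H) H, |Q η - Z * P η| ≤ M * Z^3 / 18 := by
    intro η hη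
    have hint := conj1 η hη
    have hconst : IntervalIntegrable (fun _ : ℝ => P η) volume 0 Z := intervalIntegrable_const
    have e : Q η - Z * P η
        = ∫ τ in (0:ℝ)..Z, ((f (↑x + ↑η + ↑τ * Complex.I)).im / τ - P η) := by
      rw [intervalIntegral.integral_sub hint hconst, intervalIntegral.integral_const,
        smul_eq_mul, hQdef]
      ring
    have hb := intervalIntegral.norm_integral_le_abs_of_norm_le (μ := volume)
      (f := fun τ : ℝ => (f (↑x + ↑η + ↑τ * Complex.I)).im / τ - P η)
      (g := fun τ : ℝ => M * τ^2/6) (a := 0) (b := Z)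
      (by
        filter_upwards [ae_restrict_mem measurableSet_uIoc] with τ hτ
        rw [Real.norm_eq_abs]
        exact key1' η hη τ ((uIoc_of_le hZ.le) ▸ hτ))
      (((continuous_const.mul (continuous_pow 2)).div_const 6).intervalIntegrable _ _)
    rw [e, ← Real.norm_eq_abs]
    refine le_trans hb ?_
    have hval : (∫ τ in (0:ℝ)..Z, M * τ^2/6) = M * Z^3/18 := by
      simp_rw [mul_div_assoc]
      rw [intervalIntegral.integral_const_mul, intervalIntegral.integral_div, integral_pow]
      ring
    rw [hval, abs_of_nonneg (by positivity)]
  have hFTC : (∫ η in (-H)..H, P η) = (f (↑x + ↑H)).re - (f (↑x + ↑(-H))).re := by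
    have hd : ∀ t ∈ uIcc (-H) H,
        HasDerivAt (fun s : ℝ => (f (↑x + ↑s)).re) (P t) t := by
      intro t ht
      have htI : t ∈ Icc (-H) H := huIccH ▸ ht
      have hda : HasDerivAt f (deriv f (↑x + ↑t)) (↑x + ↑t) :=
        ((hf.analyticOnNhd hU) _ (hsegU t htI)).differentiableAt.hasDerivAt
      have hL : HasDerivAt (fun w : ℂ => ↑x + w) 1 (↑t : ℂ) := (hasDerivAt_id _).const_add _
      have hcomp : HasDerivAt (fun w : ℂ => f (↑x + w)) (deriv f (↑x + ↑t)) ↑t := by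
        simpa [Function.comp_def] using HasDerivAt.comp (↑t : ℂ) hda hL
      exact hcomp.real_of_complex
    exact intervalIntegral.integral_eq_sub_of_hasDerivAt hd
      (huIccH ▸ hPcont : ContinuousOn P (uIcc (-H) H)).intervalIntegrable
  have hΔ : |(f (↑x + ↑H)).re - (f (↑x + ↑(-H))).re - 2*H*(deriv f ↑x).re| ≤ M * H^3 / 3 := by
    have mem1 : ∀ s ∈ Icc (0:ℝ) H, ((x:ℂ) + ↑s * 1) ∈ U := by
      intro s hs
      refine hΩU ⟨?_, ?_, ?_⟩ <;>
        simp [abs_of_nonneg hs.1, hs.2, hZ.le]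
    have mem2 : ∀ s ∈ Icc (0:ℝ) H, ((x:ℂ) + ↑s * (-1)) ∈ U := by
      intro s hs
      refine hΩU ⟨?_, ?_, ?_⟩ <;>
        simp [abs_of_nonneg hs.1, hs.2, hZ.le, abs_neg]
    have bnd1 : ∀ s ∈ Icc (0:ℝ) H, ‖iteratedDeriv 3 f ((x:ℂ) + ↑s * 1)‖ ≤ M := by
      intro s hs
      refine hM _ ⟨?_, ?_, ?_⟩ <;> simp [abs_of_nonneg hs.1, hs.2, hZ.le]
    have bnd2 : ∀ s ∈ Icc (0:ℝ) H, ‖iteratedDeriv 3 f ((x:ℂ) + ↑s * (-1))‖ ≤ M := by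
      intro s hs
      refine hM _ ⟨?_, ?_, ?_⟩ <;> simp [abs_of_nonneg hs.1, hs.2, hZ.le, abs_neg]
    have key2 := taylor ↑x 1 (by simp) H hH mem1 bnd1 H ⟨hH.le, le_refl H⟩
    have key3 := taylor ↑x (-1) (by norm_num) H hH mem2 bnd2 H ⟨hH.le, le_refl H⟩
    rw [show ((x:ℂ) + ↑H * 1) = ↑x + ↑H by ring] at key2
    rw [show ((x:ℂ) + ↑H * (-1)) = ↑x + ↑(-H) by push_cast; ring] at key3
    have hnorm : ‖(f (↑x + ↑H) - f (↑x + ↑(-H))) - 2*(H:ℂ)*deriv f ↑x‖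
        ≤ M*H^3/6 + M*H^3/6 := by
      have heq : (f (↑x + ↑H) - f (↑x + ↑(-H))) - 2*(H:ℂ)*deriv f ↑x
          = (f (↑x + ↑H) - f ↑x - ↑H * (1 * deriv f ↑x)
              - ((H:ℂ)^2/2) * (1^2 * iteratedDeriv 2 f ↑x))
            - (f (↑x + ↑(-H)) - f ↑x - ↑H * ((-1) * deriv f ↑x)
              - ((H:ℂ)^2/2) * ((-1)^2 * iteratedDeriv 2 f ↑x)) := by ring
      rw [heq]
      exact le_trans (norm_sub_le _ _) (add_le_add key2 key3)
    have hre := Complex.abs_re_le_norm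
      ((f (↑x + ↑H) - f (↑x + ↑(-H))) - 2*(H:ℂ)*deriv f ↑x)
    have hreval : ((f (↑x + ↑H) - f (↑x + ↑(-H))) - 2*(H:ℂ)*deriv f ↑x).re
        = (f (↑x + ↑H)).re - (f (↑x + ↑(-H))).re - 2*H*(deriv f ↑x).re := by
      rw [show 2*(H:ℂ) = ((2*H : ℝ) : ℂ) by push_cast; ring]
      simp [Complex.sub_re, Complex.re_ofReal_mul]
    rw [hreval] at hre
    linarith
  refine ⟨conj1, conj2, ?_⟩
  set IE := ∫ η in (-H)..H, (Q η - Z * P η) with hIEdef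
  have hPint : IntervalIntegrable (fun η => Z * P η) volume (-H) H :=
    ((huIccH ▸ (continuousOn_const.mul hPcont)
      : ContinuousOn (fun η => Z * P η) (uIcc (-H) H))).intervalIntegrable
  have hsplit : (∫ η in (-H)..H, Q η)
      = Z * ((f (↑x + ↑H)).re - (f (↑x + ↑(-H))).re) + IE := by
    have hEint : IntervalIntegrable (fun η => Q η - Z * P η) volume (-H) H :=
      conj2.sub hPint
    have he : (∫ η in (-H)..H, Q η)
        = ∫ η in (-H)..H, (Z * P η + (Q η - Z * P η)) := by
      apply intervalIntegral.integral_congr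
      intro η _; ring
    rw [he, intervalIntegral.integral_add hPint hEint,
      intervalIntegral.integral_const_mul, hFTC, hIEdef]
  have hIE : |IE| ≤ M * Z^3/18 * (2*H) := by
    rw [hIEdef, ← Real.norm_eq_abs]
    refine le_trans (intervalIntegral.norm_integral_le_of_norm_le_const
      (C := M * Z^3/18) ?_) ?_
    · intro η hη
      rw [Real.norm_eq_abs]
      exact hQval η (Ioc_subset_Icc_self ((uIoc_of_le (by linarith : -H ≤ H)) ▸ hη))
    · rw [show H - (-H) = 2*H by ring, abs_of_pos (by linarith)]
  rw [hsplit]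
  have hexp : 1/(2*H*Z) * (Z * ((f (↑x + ↑H)).re - (f (↑x + ↑(-H))).re) + IE)
        - (deriv f ↑x).re
      = ((f (↑x + ↑H)).re - (f (↑x + ↑(-H))).re - 2*H*(deriv f ↑x).re)/(2*H)
        + IE/(2*H*Z) := by
    field_simp
    ring
  rw [hexp]
  calc |((f (↑x + ↑H)).re - (f (↑x + ↑(-H))).re - 2*H*(deriv f ↑x).re)/(2*H) + IE/(2*H*Z)|
      ≤ |(f (↑x + ↑H)).re - (f (↑x + ↑(-H))).re - 2*H*(deriv f ↑x).re|/(2*H)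
        + |IE|/(2*H*Z) := by
          refine le_trans (abs_add_le _ _) ?_
          rw [abs_div, abs_div, abs_of_pos (by linarith : (0:ℝ) < 2*H),
            abs_of_pos (by positivity : (0:ℝ) < 2*H*Z)]
    _ ≤ (M * H^3/3)/(2*H) + (M * Z^3/18*(2*H))/(2*H*Z) := by
          gcongr
    _ = M / 6 * H ^ 2 + M / 18 * Z ^ 2 := by
          field_simp
          ring
end

section
/- The original complex-step first-derivative formula: if f is analytic on a neighborhood of the segment {x + it : 0 ≤ t ≤ Δ} and |f'''| ≤ M there, then |Im[f(x + iΔ)]/Δ − f'(x)| ≤ M·Δ²/6, where f takes real values on the real axis (f restricted to ℝ is real-valued). -/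
open MeasureTheory Topology

private lemma cs_mem_seg (x Δ : ℝ) (hΔ : 0 < Δ) {t : ℝ} (ht : t ∈ Set.Icc (0:ℝ) Δ) :
    (↑x + ↑t * Complex.I) ∈ segment ℝ (↑x : ℂ) (↑x + ↑Δ * Complex.I) := by
  rw [segment_eq_image']
  refine ⟨t / Δ, ⟨div_nonneg ht.1 hΔ.le, div_le_one_of_le₀ ht.2 hΔ.le⟩, ?_⟩
  simp only [add_sub_cancel_left, Complex.real_smul]
  have : (Δ:ℂ) ≠ 0 := Complex.ofReal_ne_zero.mpr hΔ.ne'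
  push_cast
  field_simp

private lemma cs_hasDerivAt (g : ℂ → ℂ) (U : Set ℂ) (hU : IsOpen U)
    (hg : DifferentiableOn ℂ g U) (x t : ℝ) (hz : (↑x + ↑t * Complex.I) ∈ U) :
    HasDerivAt (fun s : ℝ => g (↑x + ↑s * Complex.I))
      (Complex.I * deriv g (↑x + ↑t * Complex.I)) t := by
  have h1 : HasDerivAt g (deriv g (↑x + ↑t * Complex.I)) (↑x + ↑t * Complex.I) :=
    (hg.differentiableAt (hU.mem_nhds hz)).hasDerivAt
  have h2 : HasDerivAt (fun w : ℂ => ↑x + w * Complex.I) Complex.I ↑t := by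
    simpa using ((hasDerivAt_id (↑t : ℂ)).mul_const Complex.I).const_add ↑x
  have h3 := (h1.comp (↑t : ℂ) h2).comp_ofReal
  simpa [mul_comm] using h3

private lemma cs_real_deriv (g : ℂ → ℂ) (U : Set ℂ) (hU : IsOpen U)
    (hg : DifferentiableOn ℂ g U) (t : ℝ) (htU : (↑t : ℂ) ∈ U)
    (hev : ∀ᶠ s : ℝ in 𝓝 t, (g ↑s).im = 0) : (deriv g ↑t).im = 0 := by
  have h1 : HasDerivAt g (deriv g ↑t) ↑t :=
    (hg.differentiableAt (hU.mem_nhds htU)).hasDerivAt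
  have h3 : HasDerivAt (fun s : ℝ => (g ↑s).im) ((deriv g ↑t).im) t :=
    Complex.imCLM.hasFDerivAt.comp_hasDerivAt t h1.comp_ofReal
  have h4 : HasDerivAt (fun s : ℝ => (g ↑s).im) 0 t :=
    (hasDerivAt_const t (0:ℝ)).congr_of_eventuallyEq (hev.mono fun s hs => hs)
  exact h3.unique h4

/-- the original complex-step first-derivative formula:
for `f` analytic on a neighborhood of the vertical segment from `x` to `x+iΔ`,
real-valued on the real axis, with `|f'''| ≤ M` on the segment,
`|Im[f(x+iΔ)]/Δ − f'(x)| ≤ M·Δ²/6`. -/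
theorem complex_step_first_derivative
    (f : ℂ → ℂ) (x Δ M : ℝ) (hΔ : 0 < Δ)
    (U : Set ℂ) (hU : IsOpen U)
    (hseg : segment ℝ (↑x : ℂ) (↑x + ↑Δ * Complex.I) ⊆ U)
    (hf : DifferentiableOn ℂ f U)
    (hreal : ∀ t : ℝ, (f t).im = 0)
    (hM : ∀ z ∈ segment ℝ (↑x : ℂ) (↑x + ↑Δ * Complex.I),
      ‖iteratedDeriv 3 f z‖ ≤ M) :
    |(f (↑x + ↑Δ * Complex.I)).im / Δ - (deriv f ↑x).re| ≤ M * Δ ^ 2 / 6 := by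
  set F1 := deriv f with hF1
  set F2 := deriv F1 with hF2
  set F3 := deriv F2 with hF3
  have ha : AnalyticOnNhd ℂ f U := hf.analyticOnNhd hU
  have ha1 : AnalyticOnNhd ℂ F1 U := ha.deriv
  have ha2 : AnalyticOnNhd ℂ F2 U := ha1.deriv
  have ha3 : AnalyticOnNhd ℂ F3 U := ha2.deriv
  have hd1 : DifferentiableOn ℂ F1 U := ha1.differentiableOn
  have hd2 : DifferentiableOn ℂ F2 U := ha2.differentiableOn
  have hF3eq : F3 = iteratedDeriv 3 f := by
    simp [hF3, hF2, hF1, iteratedDeriv_succ, iteratedDeriv_zero]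
  -- membership facts
  have hzU : ∀ t ∈ Set.Icc (0:ℝ) Δ, (↑x + ↑t * Complex.I) ∈ U :=
    fun t ht => hseg (cs_mem_seg x Δ hΔ ht)
  have hxU : (↑x : ℂ) ∈ U := hseg (left_mem_segment ℝ _ _)
  -- realness of derivatives at x
  have hUx : ∀ᶠ s : ℝ in 𝓝 x, (↑s : ℂ) ∈ U :=
    (hU.preimage Complex.continuous_ofReal).eventually_mem hxU
  have hf1real : (F1 ↑x).im = 0 :=
    cs_real_deriv f U hU hf x hxU (Filter.Eventually.of_forall hreal)
  have hf1real' : ∀ᶠ s : ℝ in 𝓝 x, (F1 ↑s).im = 0 :=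
    hUx.mono fun s hs => cs_real_deriv f U hU hf s hs (Filter.Eventually.of_forall hreal)
  have hf2real : (F2 ↑x).im = 0 := cs_real_deriv F1 U hU hd1 x hxU hf1real'
  -- the auxiliary function and its derivative
  set z : ℝ → ℂ := fun t => ↑x + ↑t * Complex.I with hz
  set h : ℝ → ℂ := fun t => f (z t) + (↑Δ - ↑t) * (Complex.I * F1 (z t))
      - (↑Δ - ↑t) ^ 2 / 2 * F2 (z t) with hh
  set φ : ℝ → ℂ := fun t => -((↑Δ - ↑t) ^ 2 / 2 * (Complex.I * F3 (z t))) with hφ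
  have hder : ∀ t ∈ Set.Icc (0:ℝ) Δ, HasDerivAt h (φ t) t := by
    intro t ht
    have hzt := hzU t ht
    have hA := cs_hasDerivAt f U hU hf x t hzt
    have hB := cs_hasDerivAt F1 U hU hd1 x t hzt
    have hC := cs_hasDerivAt F2 U hU hd2 x t hzt
    have hc1 : HasDerivAt (fun s : ℝ => ((Δ:ℂ) - ↑s)) (-1) t := by
      simpa using (Complex.ofRealCLM.hasDerivAt (x := t)).const_sub (Δ:ℂ)
    have hc2 : HasDerivAt (fun s : ℝ => ((Δ:ℂ) - ↑s) ^ 2 / 2) (-((Δ:ℂ) - ↑t)) t := by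
      have h0 := (hc1.mul hc1).div_const 2
      have he : (fun s : ℝ => ((Δ:ℂ) - ↑s) ^ 2 / 2)
          = fun s : ℝ => ((Δ:ℂ) - ↑s) * ((Δ:ℂ) - ↑s) / 2 := by
        ext s; ring
      rw [he]
      convert h0 using 1
      · rfl
      · rfl
      ring
    have htot := (hA.add (hc1.mul (hB.const_mul Complex.I))).sub (hc2.mul hC)
    convert htot using 1
    · rfl
    · rfl
    simp only [hφ]
    have hI : Complex.I * Complex.I = -1 := Complex.I_mul_I
    ring_nf
    rw [Complex.I_sq]
    simp only [hz, ← hF1, ← hF2, ← hF3]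
    ring
  -- FTC
  have hzc : Continuous z := by
    apply Continuous.add continuous_const
    exact (Complex.continuous_ofReal).mul continuous_const
  have hφc : ContinuousOn φ (Set.Icc (0:ℝ) Δ) := by
    apply ContinuousOn.neg
    apply ContinuousOn.mul
    · exact ((continuous_const.sub Complex.continuous_ofReal).pow 2).continuousOn.div_const 2
    · exact continuousOn_const.mul
        ((ha3.differentiableOn.continuousOn).comp hzc.continuousOn hzU)
  have hNN : Set.uIcc (0:ℝ) Δ = Set.Icc 0 Δ := Set.uIcc_of_le hΔ.le
  have hint : IntervalIntegrable φ volume 0 Δ := by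
    rw [intervalIntegrable_iff_integrableOn_Icc_of_le hΔ.le]
    exact hφc.integrableOn_Icc
  have hFTC : ∫ t in (0:ℝ)..Δ, φ t = h Δ - h 0 :=
    intervalIntegral.integral_eq_sub_of_hasDerivAt
      (fun t ht => hder t (hNN ▸ ht)) hint
  -- bound the integral
  have hM0 : 0 ≤ M := le_trans (norm_nonneg _) (hM _ (left_mem_segment ℝ _ _))
  have hgint : IntervalIntegrable (fun t => M / 2 * (Δ - t) ^ 2) volume 0 Δ := by
    apply Continuous.intervalIntegrable
    exact continuous_const.mul ((continuous_const.sub continuous_id).pow 2)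
  have hnorm : ∀ t ∈ Set.Ioc (0:ℝ) Δ, ‖φ t‖ ≤ M / 2 * (Δ - t) ^ 2 := by
    intro t ht
    have htIcc : t ∈ Set.Icc (0:ℝ) Δ := Set.Ioc_subset_Icc_self ht
    have hMt : ‖F3 (z t)‖ ≤ M := by
      rw [hF3eq]; exact hM _ (cs_mem_seg x Δ hΔ htIcc)
    have h1 : ‖φ t‖ = (Δ - t) ^ 2 / 2 * ‖F3 (z t)‖ := by
      have : ((Δ:ℂ) - ↑t) ^ 2 / 2 = ((((Δ - t) ^ 2 / 2 : ℝ)) : ℂ) := by push_cast; ring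
      simp only [hφ, norm_neg, norm_mul, this, Complex.norm_real, Complex.norm_I, one_mul]
      rw [Real.norm_eq_abs, abs_of_nonneg (by positivity)]
    rw [h1]
    calc (Δ - t) ^ 2 / 2 * ‖F3 (z t)‖ ≤ (Δ - t) ^ 2 / 2 * M := by
          apply mul_le_mul_of_nonneg_left hMt (by positivity)
      _ = M / 2 * (Δ - t) ^ 2 := by ring
  have hgval : ∫ t in (0:ℝ)..Δ, M / 2 * (Δ - t) ^ 2 = M * Δ ^ 3 / 6 := by
    rw [intervalIntegral.integral_const_mul]
    have : ∫ t in (0:ℝ)..Δ, (Δ - t) ^ 2 = Δ ^ 3 / 3 := by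
      rw [intervalIntegral.integral_comp_sub_left (fun u => u ^ 2) Δ]
      simp [integral_pow]
      ring
    rw [this]; ring
  have hbound : ‖∫ t in (0:ℝ)..Δ, φ t‖ ≤ M * Δ ^ 3 / 6 := by
    have h1 := intervalIntegral.norm_integral_le_abs_of_norm_le (μ := volume) (a := 0) (b := Δ)
      (f := φ) (g := fun t => M / 2 * (Δ - t) ^ 2) ?_ hgint
    · calc ‖∫ t in (0:ℝ)..Δ, φ t‖ ≤ |∫ t in (0:ℝ)..Δ, M / 2 * (Δ - t) ^ 2| := h1
        _ = M * Δ ^ 3 / 6 := by rw [hgval, abs_of_nonneg (by positivity)]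
    · rw [Set.uIoc_of_le hΔ.le]
      exact (MeasureTheory.ae_restrict_mem measurableSet_Ioc).mono hnorm
  -- imaginary part computation
  have hhΔ : (h Δ).im = (f (↑x + ↑Δ * Complex.I)).im := by
    simp [hh, hz]
  have hh0 : (h 0).im = Δ * (F1 ↑x).re := by
    have hx0 : z 0 = (↑x : ℂ) := by simp [hz]
    simp only [hh, hx0, Complex.ofReal_zero, sub_zero]
    rw [show ((Δ:ℂ)) ^ 2 / 2 = ((Δ ^ 2 / 2 : ℝ) : ℂ) by push_cast; ring]
    simp [Complex.add_im, Complex.sub_im, Complex.mul_im, Complex.mul_re,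
      hreal x, hf1real, hf2real]
    left
    simp [pow_two]
  have himle : |(f (↑x + ↑Δ * Complex.I)).im - Δ * (deriv f ↑x).re| ≤ M * Δ ^ 3 / 6 := by
    have h2 : (h Δ - h 0).im = (f (↑x + ↑Δ * Complex.I)).im - Δ * (F1 ↑x).re := by
      rw [Complex.sub_im, hhΔ, hh0]
    have h3 : |(h Δ - h 0).im| ≤ ‖h Δ - h 0‖ := Complex.abs_im_le_norm _
    rw [h2] at h3
    rw [← hFTC] at h3
    exact h3.trans hbound
  have hΔ3 : M * Δ ^ 3 / 6 = M * Δ ^ 2 / 6 * Δ := by ring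
  have key : (f (↑x + ↑Δ * Complex.I)).im / Δ - (deriv f ↑x).re
      = ((f (↑x + ↑Δ * Complex.I)).im - Δ * (deriv f ↑x).re) / Δ := by
    field_simp
  rw [key, abs_div, abs_of_pos hΔ, div_le_iff₀ hΔ]
  rw [hΔ3] at himle
  exact himle
end
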